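/- Let 𝒜, ℬ, 𝒞, 𝒟 be Hermiticity-preserving linear maps between matrix algebras such that 𝒜 + ℬ, 𝒜 - ℬ, 𝒞 + 𝒟, and 𝒞 - 𝒟 are all completely positive. Then 𝒜 ∘ 𝒞 + ℬ ∘ 𝒟 and 𝒜 ∘ 𝒞 - ℬ ∘ 𝒟 are completely positive. -/

import Mathlib

open Matrix
open scoped Kronecker ComplexOrder

/-- The Choi matrix of a linear map between matrix algebras. -/
noncomputable def choiMatrix {α β : Type*} [Fintype α] [DecidableEq α]
    (Φ : Matrix α α ℂ →ₗ[ℂ] Matrix β β ℂ) : Matrix (α × β) (α × β) ℂ :=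
  Matrix.of fun p q => Φ (Matrix.single p.1 q.1 1) p.2 q.2

/-- A linear map between matrix algebras is completely positive iff its Choi matrix is
positive semidefinite. -/
def IsCompletelyPositive {α β : Type*} [Fintype α] [DecidableEq α] [Fintype β]
    (Φ : Matrix α α ℂ →ₗ[ℂ] Matrix β β ℂ) : Prop :=
  (choiMatrix Φ).PosSemidef

/-- A linear map between matrix algebras is Hermiticity preserving if it sends Hermitian
matrices to Hermitian matrices. -/
def IsHermitianPreserving {α β : Type*}
    (Φ : Matrix α α ℂ →ₗ[ℂ] Matrix β β ℂ) : Prop :=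
  ∀ X : Matrix α α ℂ, X.IsHermitian → (Φ X).IsHermitian

/-!
Completely positive maps are exactly the sums of conjugations `X ↦ A X Aᴴ` (Kraus), so they are
closed under composition, sums and nonnegative scalings. The theorem then follows from
`2 (𝒜𝒞 + ℬ𝒟) = (𝒜 + ℬ)(𝒞 + 𝒟) + (𝒜 - ℬ)(𝒞 - 𝒟)`, and its second half from the first
applied to `-𝒟`.
-/

section

variable {α β γ : Type*} [Fintype α]

noncomputable def conjMap (A : Matrix β α ℂ) : Matrix α α ℂ →ₗ[ℂ] Matrix β β ℂ where
  toFun X := A * X * Aᴴ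
  map_add' X Y := by simp only [Matrix.mul_add, Matrix.add_mul]
  map_smul' c X := by simp only [Matrix.mul_smul, Matrix.smul_mul, RingHom.id_apply]

theorem conjMap_apply (A : Matrix β α ℂ) (X : Matrix α α ℂ) : conjMap A X = A * X * Aᴴ := rfl

theorem conjMap_comp_conjMap [Fintype β] (A : Matrix γ β ℂ) (B : Matrix β α ℂ) :
    conjMap A ∘ₗ conjMap B = conjMap (A * B) := by
  ext X : 1
  simp only [LinearMap.comp_apply, conjMap_apply, conjTranspose_mul, Matrix.mul_assoc]

variable [DecidableEq α]

theorem choiMatrix_conjMap (A : Matrix β α ℂ) :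
    choiMatrix (conjMap A) =
      vecMulVec (fun p : α × β => A p.2 p.1) (star fun p : α × β => A p.2 p.1) := by
  ext ⟨i, p⟩ ⟨j, q⟩
  simp [choiMatrix, conjMap_apply, vecMulVec_apply, Matrix.mul_apply, Matrix.single, ite_and]

theorem choiMatrix_add (Φ Ψ : Matrix α α ℂ →ₗ[ℂ] Matrix β β ℂ) :
    choiMatrix (Φ + Ψ) = choiMatrix Φ + choiMatrix Ψ := by
  ext; simp [choiMatrix]

theorem choiMatrix_smul (c : ℂ) (Φ : Matrix α α ℂ →ₗ[ℂ] Matrix β β ℂ) :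
    choiMatrix (c • Φ) = c • choiMatrix Φ := by
  ext; simp [choiMatrix]

theorem choiMatrix_sum {ι : Type*} (s : Finset ι) (Φ : ι → Matrix α α ℂ →ₗ[ℂ] Matrix β β ℂ) :
    choiMatrix (∑ k ∈ s, Φ k) = ∑ k ∈ s, choiMatrix (Φ k) := by
  ext; simp [choiMatrix, Matrix.sum_apply]

theorem choiMatrix_injective :
    Function.Injective (choiMatrix : (Matrix α α ℂ →ₗ[ℂ] Matrix β β ℂ) → _) := by
  intro Φ Ψ h
  refine (Matrix.stdBasis ℂ α α).ext fun ⟨i, j⟩ => ?_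
  ext r s
  simpa [choiMatrix, Matrix.stdBasis_eq_single] using congr_fun₂ h (i, r) (j, s)

variable [Fintype β]

theorem isCompletelyPositive_conjMap (A : Matrix β α ℂ) : IsCompletelyPositive (conjMap A) := by
  rw [IsCompletelyPositive, choiMatrix_conjMap]
  exact posSemidef_vecMulVec_self_star _

namespace IsCompletelyPositive

theorem add {Φ Ψ : Matrix α α ℂ →ₗ[ℂ] Matrix β β ℂ}
    (hΦ : IsCompletelyPositive Φ) (hΨ : IsCompletelyPositive Ψ) :
    IsCompletelyPositive (Φ + Ψ) := by
  rw [IsCompletelyPositive, choiMatrix_add]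
  exact PosSemidef.add hΦ hΨ

theorem smul {Φ : Matrix α α ℂ →ₗ[ℂ] Matrix β β ℂ} (hΦ : IsCompletelyPositive Φ)
    {c : ℂ} (hc : 0 ≤ c) : IsCompletelyPositive (c • Φ) := by
  rw [IsCompletelyPositive, choiMatrix_smul]
  exact PosSemidef.smul hΦ hc

theorem sum {ι : Type*} (s : Finset ι) {Φ : ι → Matrix α α ℂ →ₗ[ℂ] Matrix β β ℂ}
    (h : ∀ k ∈ s, IsCompletelyPositive (Φ k)) : IsCompletelyPositive (∑ k ∈ s, Φ k) := by
  rw [IsCompletelyPositive, choiMatrix_sum]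
  exact posSemidef_sum s h

theorem exists_eq_sum_conjMap {Φ : Matrix α α ℂ →ₗ[ℂ] Matrix β β ℂ}
    (hΦ : IsCompletelyPositive Φ) :
    ∃ (m : ℕ) (A : Fin m → Matrix β α ℂ), Φ = ∑ k, conjMap (A k) := by
  obtain ⟨m, v, hv⟩ := posSemidef_iff_eq_sum_vecMulVec.mp hΦ
  refine ⟨m, fun k => Matrix.of fun p i => v k (i, p), choiMatrix_injective ?_⟩
  simpa only [choiMatrix_sum, choiMatrix_conjMap, of_apply] using hv

theorem comp [DecidableEq β] [Fintype γ] {Φ : Matrix β β ℂ →ₗ[ℂ] Matrix γ γ ℂ}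
    {Ψ : Matrix α α ℂ →ₗ[ℂ] Matrix β β ℂ}
    (hΦ : IsCompletelyPositive Φ) (hΨ : IsCompletelyPositive Ψ) :
    IsCompletelyPositive (Φ ∘ₗ Ψ) := by
  obtain ⟨m, A, rfl⟩ := hΦ.exists_eq_sum_conjMap
  obtain ⟨n, B, rfl⟩ := hΨ.exists_eq_sum_conjMap
  have h : (∑ k, conjMap (A k)) ∘ₗ ∑ l, conjMap (B l) =
      ∑ l, ∑ k, conjMap (A k * B l) := by
    ext X : 1
    simp only [LinearMap.comp_apply, LinearMap.sum_apply, map_sum, ← conjMap_comp_conjMap]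
  rw [h]
  exact sum _ fun l _ => sum _ fun k _ => isCompletelyPositive_conjMap _

theorem comp_add_comp [DecidableEq β] [Fintype γ] {𝒜 ℬ : Matrix β β ℂ →ₗ[ℂ] Matrix γ γ ℂ}
    {𝒞 𝒟 : Matrix α α ℂ →ₗ[ℂ] Matrix β β ℂ}
    (hApB : IsCompletelyPositive (𝒜 + ℬ)) (hAmB : IsCompletelyPositive (𝒜 - ℬ))
    (hCpD : IsCompletelyPositive (𝒞 + 𝒟)) (hCmD : IsCompletelyPositive (𝒞 - 𝒟)) :
    IsCompletelyPositive (𝒜 ∘ₗ 𝒞 + ℬ ∘ₗ 𝒟) := by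
  have h : 𝒜 ∘ₗ 𝒞 + ℬ ∘ₗ 𝒟 = (2⁻¹ : ℂ) • ((𝒜 + ℬ) ∘ₗ (𝒞 + 𝒟) + (𝒜 - ℬ) ∘ₗ (𝒞 - 𝒟)) := by
    simp only [LinearMap.add_comp, LinearMap.comp_add, LinearMap.sub_comp, LinearMap.comp_sub]
    module
  rw [h]
  exact ((hApB.comp hCpD).add (hAmB.comp hCmD)).smul (by simp)

end IsCompletelyPositive

end

theorem isCompletelyPositive_comp_add_comp_and_sub_comp_general
    {a b c : ℕ}
    (𝒜 ℬ : Matrix (Fin b) (Fin b) ℂ →ₗ[ℂ] Matrix (Fin c) (Fin c) ℂ)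
    (𝒞 𝒟 : Matrix (Fin a) (Fin a) ℂ →ₗ[ℂ] Matrix (Fin b) (Fin b) ℂ)
    (hApB : IsCompletelyPositive (𝒜 + ℬ)) (hAmB : IsCompletelyPositive (𝒜 - ℬ))
    (hCpD : IsCompletelyPositive (𝒞 + 𝒟)) (hCmD : IsCompletelyPositive (𝒞 - 𝒟)) :
    IsCompletelyPositive (𝒜 ∘ₗ 𝒞 + ℬ ∘ₗ 𝒟) ∧ IsCompletelyPositive (𝒜 ∘ₗ 𝒞 - ℬ ∘ₗ 𝒟) := by
  refine ⟨hApB.comp_add_comp hAmB hCpD hCmD, ?_⟩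
  have h := hApB.comp_add_comp hAmB (𝒟 := -𝒟) (by rwa [← sub_eq_add_neg])
    (by rwa [sub_neg_eq_add])
  rwa [LinearMap.comp_neg, ← sub_eq_add_neg] at h

/-- If `𝒜, ℬ, 𝒞, 𝒟` are Hermiticity-preserving linear maps such that
`𝒜 ± ℬ` and `𝒞 ± 𝒟` are completely positive, then `𝒜 ∘ 𝒞 ± ℬ ∘ 𝒟` are completely positive. -/
theorem isCompletelyPositive_comp_add_comp_and_sub_comp
    {a b c : ℕ}
    (𝒜 ℬ : Matrix (Fin b) (Fin b) ℂ →ₗ[ℂ] Matrix (Fin c) (Fin c) ℂ)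
    (𝒞 𝒟 : Matrix (Fin a) (Fin a) ℂ →ₗ[ℂ] Matrix (Fin b) (Fin b) ℂ)
    (hA : IsHermitianPreserving 𝒜) (hB : IsHermitianPreserving ℬ)
    (hC : IsHermitianPreserving 𝒞) (hD : IsHermitianPreserving 𝒟)
    (hApB : IsCompletelyPositive (𝒜 + ℬ)) (hAmB : IsCompletelyPositive (𝒜 - ℬ))
    (hCpD : IsCompletelyPositive (𝒞 + 𝒟)) (hCmD : IsCompletelyPositive (𝒞 - 𝒟)) :
    IsCompletelyPositive (𝒜 ∘ₗ 𝒞 + ℬ ∘ₗ 𝒟) ∧ IsCompletelyPositive (𝒜 ∘ₗ 𝒞 - ℬ ∘ₗ 𝒟) :=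
  isCompletelyPositive_comp_add_comp_and_sub_comp_general 𝒜 ℬ 𝒞 𝒟 hApB hAmB hCpD hCmD
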